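/- arXiv:2103.04678 — 2 statements merged into one kernel-verified Lean document; each statement's English description precedes it below -/
import Mathlib

section
/- Let A = Σ_{j=2}^p λ_j w_j w_j' + w_1 w_1' C be a p×p real matrix, where λ_2, …, λ_p are nonzero reals, w_1, …, w_p form an orthonormal set of vectors in ℝ^p, and C is a symmetric positive definite p×p matrix. Then A is invertible, and its inverse is A^{-1} = B^† + (w_1' C w_1)^{-1} w_1 w_1' (I_p − C B^†), where B = Σ_{j=2}^p λ_j w_j w_j' and B^† = Σ_{j=2}^p λ_j^{-1} w_j w_j' is the Moore–Penrose pseudoinverse of B. -/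
/-!
With `P j = w j w jᵀ`, orthonormality makes the `P j` orthogonal idempotents summing to `1`.
Hence `B B† = 1 - P 0`, `B P 0 = 0` and `P 0 C P 0 = c P 0` with `c = w 0ᵀ C w 0 > 0`, and
these three identities alone show that the proposed matrix is a right inverse of
`A = B + P 0 C`.
-/

open Matrix

section RightInverse

variable {K A : Type*} [Field K] [Ring A] [Algebra K A]

theorem add_mul_mul_add_smul_mul_sub_eq_one {B Bd W C : A} {c : K} (hc : c ≠ 0)
    (hBBd : B * Bd = 1 - W) (hBW : B * W = 0) (hWCW : W * C * W = c • W) :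
    (B + W * C) * (Bd + c⁻¹ • (W * (1 - C * Bd))) = 1 := by
  have hB : B * (W * (1 - C * Bd)) = 0 := by rw [← mul_assoc, hBW, zero_mul]
  have hW : W * C * (W * (1 - C * Bd)) = c • (W * (1 - C * Bd)) := by
    rw [← mul_assoc, hWCW, smul_mul_assoc]
  rw [add_mul, mul_add, mul_add, mul_smul_comm, mul_smul_comm, hBBd, hB, hW, smul_zero,
    smul_smul, inv_mul_cancel₀ hc, one_smul, mul_sub, mul_one, mul_assoc]
  abel

end RightInverse

namespace Matrix

section Orthonormal

variable {m n R : Type*} [Fintype n] [DecidableEq m] [CommRing R] {w : m → n → R}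

theorem vecMulVec_self_mul_vecMulVec_self (hw : ∀ i j, w i ⬝ᵥ w j = if i = j then 1 else 0)
    (i j : m) :
    vecMulVec (w i) (w i) * vecMulVec (w j) (w j) =
      if i = j then vecMulVec (w i) (w i) else 0 := by
  rw [vecMulVec_mul_vecMulVec, hw]
  split_ifs with hij
  · rw [one_smul, hij]
  · rw [zero_smul, vecMulVec_zero]

theorem sum_smul_vecMulVec_self_mul_vecMulVec_self
    (hw : ∀ i j, w i ⬝ᵥ w j = if i = j then 1 else 0) (s : Finset m) (a : m → R) (k : m) :
    (∑ j ∈ s, a j • vecMulVec (w j) (w j)) * vecMulVec (w k) (w k) =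
      if k ∈ s then a k • vecMulVec (w k) (w k) else 0 := by
  simp only [Finset.sum_mul, smul_mul_assoc, vecMulVec_self_mul_vecMulVec_self hw, smul_ite,
    smul_zero, Finset.sum_ite_eq']

theorem sum_smul_vecMulVec_self_mul_sum_smul_vecMulVec_self
    (hw : ∀ i j, w i ⬝ᵥ w j = if i = j then 1 else 0) (s : Finset m) (a b : m → R) :
    (∑ j ∈ s, a j • vecMulVec (w j) (w j)) * (∑ j ∈ s, b j • vecMulVec (w j) (w j)) =
      ∑ j ∈ s, (a j * b j) • vecMulVec (w j) (w j) := by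
  rw [Finset.mul_sum]
  refine Finset.sum_congr rfl fun k hk => ?_
  rw [mul_smul_comm, sum_smul_vecMulVec_self_mul_vecMulVec_self hw, if_pos hk, smul_smul,
    mul_comm]

end Orthonormal

theorem sum_vecMulVec_self_eq_one {n R : Type*} [Fintype n] [DecidableEq n] [CommRing R]
    {w : n → n → R} (hw : ∀ i j, w i ⬝ᵥ w j = if i = j then 1 else 0) :
    ∑ j, vecMulVec (w j) (w j) = 1 := by
  have hrows : of w * (of w)ᵀ = 1 := by
    ext i j
    simpa [mul_apply, dotProduct, one_apply] using hw i j
  rw [← mul_eq_one_comm.mp hrows]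
  ext i k
  simp [mul_apply, vecMulVec_apply, sum_apply]

theorem vecMulVec_self_mul_mul_vecMulVec_self {n R : Type*} [Fintype n] [CommRing R]
    (u : n → R) (M : Matrix n n R) :
    vecMulVec u u * M * vecMulVec u u = (u ⬝ᵥ M *ᵥ u) • vecMulVec u u := by
  rw [vecMulVec_mul, vecMulVec_mul_vecMulVec, vecMulVec_smul, dotProduct_mulVec]

end Matrix

theorem stmt_0_general (p : ℕ) [NeZero p]
    (w : Fin p → (Fin p → ℝ)) (lam : Fin p → ℝ)
    (hlam : ∀ j : Fin p, j ≠ 0 → lam j ≠ 0)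
    (hw : ∀ i j : Fin p, w i ⬝ᵥ w j = if i = j then 1 else 0)
    (C : Matrix (Fin p) (Fin p) ℝ) (hC : C.PosDef)
    (B Bd A : Matrix (Fin p) (Fin p) ℝ)
    (hB : B = ∑ j ∈ Finset.univ.erase (0 : Fin p), lam j • vecMulVec (w j) (w j))
    (hBd : Bd = ∑ j ∈ Finset.univ.erase (0 : Fin p), (lam j)⁻¹ • vecMulVec (w j) (w j))
    (hA : A = B + vecMulVec (w 0) (w 0) * C) :
    IsUnit A ∧
      A⁻¹ = Bd + (w 0 ⬝ᵥ C.mulVec (w 0))⁻¹ •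
        (vecMulVec (w 0) (w 0) * (1 - C * Bd)) := by
  have hw0 : w 0 ≠ 0 := fun h => by simpa [h] using hw 0 0
  have hc : w 0 ⬝ᵥ C *ᵥ w 0 ≠ 0 := by
    simpa using (hC.dotProduct_mulVec_pos hw0).ne'
  have hBBd : B * Bd = 1 - vecMulVec (w 0) (w 0) := by
    rw [hB, hBd, sum_smul_vecMulVec_self_mul_sum_smul_vecMulVec_self hw,
      ← sum_vecMulVec_self_eq_one hw, ← Finset.add_sum_erase _ _ (Finset.mem_univ 0),
      add_sub_cancel_left]
    refine Finset.sum_congr rfl fun j hj => ?_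
    rw [mul_inv_cancel₀ (hlam j (Finset.ne_of_mem_erase hj)), one_smul]
  have hBW : B * vecMulVec (w 0) (w 0) = 0 := by
    rw [hB, sum_smul_vecMulVec_self_mul_vecMulVec_self hw, if_neg (Finset.notMem_erase 0 _)]
  have hAM := add_mul_mul_add_smul_mul_sub_eq_one hc hBBd hBW
    (vecMulVec_self_mul_mul_vecMulVec_self (w 0) C)
  rw [← hA] at hAM
  exact ⟨.of_mul_eq_one _ hAM, inv_eq_right_inv hAM⟩

/-- inversion of a rank-structured matrix. -/
theorem stmt_0 (p : ℕ) [NeZero p]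
    (w : Fin p → (Fin p → ℝ)) (lam : Fin p → ℝ)
    (hlam : ∀ j : Fin p, j ≠ 0 → lam j ≠ 0)
    (hw : ∀ i j : Fin p, w i ⬝ᵥ w j = if i = j then 1 else 0)
    (C : Matrix (Fin p) (Fin p) ℝ) (hC : C.PosDef) (hCsymm : C.IsSymm)
    (B Bd A : Matrix (Fin p) (Fin p) ℝ)
    (hB : B = ∑ j ∈ Finset.univ.erase (0 : Fin p), lam j • vecMulVec (w j) (w j))
    (hBd : Bd = ∑ j ∈ Finset.univ.erase (0 : Fin p), (lam j)⁻¹ • vecMulVec (w j) (w j))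
    (hA : A = B + vecMulVec (w 0) (w 0) * C) :
    IsUnit A ∧
      A⁻¹ = Bd + (w 0 ⬝ᵥ C.mulVec (w 0))⁻¹ •
        (vecMulVec (w 0) (w 0) * (1 - C * Bd)) :=
  stmt_0_general p w lam hlam hw C hC B Bd A hB hBd hA
end

section
/- Under the two-component Gaussian mixture model x ∼ α_1 N_p(μ_1, Σ) + α_2 N_p(μ_2, Σ) with α_1 + α_2 = 1, α_1, α_2 > 0, μ_1 ≠ μ_2, Σ positive definite, and α_1 ∉ {1/2 − 1/√12, 1/2 + 1/√12}: the squared excess kurtosis u ↦ (κ(u) − 3)^2 over unit vectors u, where κ(u) = E[(u'(x − Ex))^4]/(E[(u'(x − Ex))^2])^2, is uniquely maximized at u = ± θ/‖θ‖, where θ = Σ^{-1}(μ_2 − μ_1). -/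
/-!
Projected on `u`, the mixture is the univariate mixture `α₁ N(-α₂ d, q) + α₂ N(α₁ d, q)` with
`d = u ⬝ (μ₂ - μ₁)` and `q = u ⬝ Σ u`. Its Gaussian moments give
`κ(u) - 3 = β (1 - 6β) (r / (1 + β r))²`, where `β = α₁ α₂` and `r = d² / q` is Fisher's
discriminant ratio. For `β ≠ 1/6` the squared excess kurtosis is therefore a strictly increasing
function of `r ≥ 0`, and Cauchy–Schwarz for the inner product `x ⬝ Σ y` gives `r(u) ≤ θ ⬝ Σ θ`,
with equality exactly when `u` is a multiple of `θ`.
-/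

open MeasureTheory ProbabilityTheory Matrix

/-- The positive semidefinite square root of a positive semidefinite matrix
(the definition Mathlib had in December 2024, since removed). -/
noncomputable def Matrix.PosSemidef.sqrt {n : Type*} [Fintype n] [DecidableEq n]
    {A : Matrix n n ℝ} (hA : A.PosSemidef) : Matrix n n ℝ :=
  hA.1.eigenvectorUnitary.1 * diagonal ((√·) ∘ hA.1.eigenvalues) *
  (star hA.1.eigenvectorUnitary : Matrix n n ℝ)

/-- A `p`-variate Gaussian measure with mean `m` and covariance `S` (positive semidefinite),
realized as the pushforward of a standard Gaussian by `w ↦ m + S^{1/2} w`. -/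
noncomputable def mvGaussian {p : ℕ} (m : Fin p → ℝ) {S : Matrix (Fin p) (Fin p) ℝ}
    (hS : S.PosSemidef) : Measure (Fin p → ℝ) :=
  (Measure.pi fun _ : Fin p => gaussianReal 0 1).map fun w => m + hS.sqrt.mulVec w

open Polynomial
open scoped NNReal MatrixOrder

noncomputable def gaussianMomentPoly (b v : ℝ) : ℕ → ℝ[X]
  | 0 => 1
  | n + 1 => derivative (gaussianMomentPoly b v n) + (C b + C v * X) * gaussianMomentPoly b v n

lemma iteratedDeriv_exp_quadratic (b v : ℝ) (n : ℕ) :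
    iteratedDeriv n (fun t => Real.exp (b * t + v * t ^ 2 / 2)) =
      fun t => (gaussianMomentPoly b v n).eval t * Real.exp (b * t + v * t ^ 2 / 2) := by
  induction n with
  | zero => simp [gaussianMomentPoly]
  | succ n ih =>
    rw [iteratedDeriv_succ, ih]
    ext t
    have hexp : HasDerivAt (fun t => Real.exp (b * t + v * t ^ 2 / 2))
        ((b + v * t) * Real.exp (b * t + v * t ^ 2 / 2)) t := by
      convert (((hasDerivAt_id' t).const_mul b).fun_add
        (((hasDerivAt_pow 2 t).const_mul v).div_const 2)).exp using 1
      push_cast; ring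
    rw [((Polynomial.hasDerivAt _ t).fun_mul hexp).deriv, gaussianMomentPoly]
    simp only [eval_add, eval_mul, eval_C, eval_X]
    ring

lemma integral_pow_gaussianReal (b : ℝ) (v : ℝ≥0) (n : ℕ) :
    ∫ x, x ^ n ∂gaussianReal b v = (gaussianMomentPoly b v n).eval 0 := by
  have h := iteratedDeriv_mgf_zero (X := fun x => x) (μ := gaussianReal b v) (by simp) n
  rw [mgf_fun_id_gaussianReal, iteratedDeriv_exp_quadratic] at h
  simpa using h.symm

lemma integral_sq_gaussianReal (b : ℝ) (v : ℝ≥0) :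
    ∫ x, x ^ 2 ∂gaussianReal b v = b ^ 2 + v := by
  simp [integral_pow_gaussianReal, gaussianMomentPoly]
  ring

lemma integral_pow_four_gaussianReal (b : ℝ) (v : ℝ≥0) :
    ∫ x, x ^ 4 ∂gaussianReal b v = b ^ 4 + 6 * b ^ 2 * v + 3 * v ^ 2 := by
  simp [integral_pow_gaussianReal, gaussianMomentPoly, derivative_mul]
  ring

lemma Matrix.PosSemidef.sqrt_eq_cfcSqrt {n : Type*} [Fintype n] [DecidableEq n]
    {A : Matrix n n ℝ} (hA : A.PosSemidef) : hA.sqrt = CFC.sqrt A := by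
  rw [CFC.sqrt_eq_cfc, cfc_nnreal_eq_real _ A hA.nonneg, hA.1.cfc_eq]
  simp only [IsHermitian.cfc, Matrix.PosSemidef.sqrt, Unitary.conjStarAlgAut_apply]
  congr 3
  funext i
  simp [hA.eigenvalues_nonneg i]

lemma Matrix.PosSemidef.dotProduct_vecMul_sqrt {n : Type*} [Fintype n] [DecidableEq n]
    {A : Matrix n n ℝ} (hA : A.PosSemidef) (u : n → ℝ) :
    (u ᵥ* hA.sqrt) ⬝ᵥ (u ᵥ* hA.sqrt) = u ⬝ᵥ A *ᵥ u := by
  have hT : (CFC.sqrt A)ᵀ = CFC.sqrt A := IsSymm.eq (CFC.sqrt_nonneg A).isSelfAdjoint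
  rw [hA.sqrt_eq_cfcSqrt, ← dotProduct_mulVec, ← mulVec_transpose, hT, mulVec_mulVec,
    CFC.sqrt_mul_sqrt_self A hA.nonneg]

lemma map_dotProduct_pi_gaussianReal {ι : Type*} [Fintype ι] (v : ι → ℝ) :
    (Measure.pi fun _ : ι => gaussianReal 0 1).map (v ⬝ᵥ ·) =
      gaussianReal 0 (v ⬝ᵥ v).toNNReal := by
  set L : StrongDual ℝ (EuclideanSpace ℝ ι) := innerSL ℝ (WithLp.toLp 2 v)
  have hL : (v ⬝ᵥ ·) = L ∘ WithLp.toLp 2 := by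
    ext w
    simp [L, EuclideanSpace.inner_eq_star_dotProduct, dotProduct_comm]
  rw [hL, ← Measure.map_map L.continuous.measurable (by fun_prop), map_pi_eq_stdGaussian,
    IsGaussian.map_eq_gaussianReal, integral_strongDual_stdGaussian, variance_dual_stdGaussian]
  simp [L, EuclideanSpace.norm_eq, dotProduct, sq]
  rw [Real.mul_self_sqrt (Finset.sum_nonneg fun i _ => mul_self_nonneg (v i))]

namespace Matrix.IsSymm

variable {n R : Type*} [Fintype n] [CommRing R] {S : Matrix n n R}

lemma dotProduct_mulVec_comm (hS : S.IsSymm) (x y : n → R) :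
    y ⬝ᵥ S *ᵥ x = x ⬝ᵥ S *ᵥ y := by
  rw [dotProduct_mulVec, ← mulVec_transpose, hS.eq, dotProduct_comm]

-- The quadratic form at `c x - b y` vanishes exactly in the equality case of Cauchy–Schwarz.
lemma quadForm_sub_smul (hS : S.IsSymm) (x y : n → R) :
    let b := x ⬝ᵥ S *ᵥ y
    let c := y ⬝ᵥ S *ᵥ y
    (c • x - b • y) ⬝ᵥ S *ᵥ (c • x - b • y) = c * ((x ⬝ᵥ S *ᵥ x) * c - b ^ 2) := by
  intro b c
  simp only [mulVec_sub, mulVec_smul, sub_dotProduct, dotProduct_sub, smul_dotProduct,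
    dotProduct_smul, smul_eq_mul, hS.dotProduct_mulVec_comm x y]
  ring

end Matrix.IsSymm

lemma Matrix.PosDef.isSymm {n : Type*} {S : Matrix n n ℝ} (hS : S.PosDef) : S.IsSymm :=
  isHermitian_iff_isSymm.1 hS.isHermitian

namespace Matrix.PosDef

variable {n : Type*} [Fintype n] {S : Matrix n n ℝ}

lemma sq_dotProduct_mulVec_le (hS : S.PosDef) (x y : n → ℝ) :
    (x ⬝ᵥ S *ᵥ y) ^ 2 ≤ (x ⬝ᵥ S *ᵥ x) * (y ⬝ᵥ S *ᵥ y) := by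
  rcases eq_or_ne y 0 with rfl | hy
  · simp
  have hc : 0 < y ⬝ᵥ S *ᵥ y := by simpa using hS.dotProduct_mulVec_pos hy
  have hnonneg := hS.posSemidef.dotProduct_mulVec_nonneg
    ((y ⬝ᵥ S *ᵥ y) • x - (x ⬝ᵥ S *ᵥ y) • y)
  rw [star_trivial, hS.isSymm.quadForm_sub_smul] at hnonneg
  nlinarith [(mul_nonneg_iff_of_pos_left hc).1 hnonneg]

lemma sq_dotProduct_mulVec_eq_iff (hS : S.PosDef) {x y : n → ℝ} (hy : y ≠ 0) :
    (x ⬝ᵥ S *ᵥ y) ^ 2 = (x ⬝ᵥ S *ᵥ x) * (y ⬝ᵥ S *ᵥ y) ↔ ∃ c : ℝ, x = c • y := by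
  have hc : 0 < y ⬝ᵥ S *ᵥ y := by simpa using hS.dotProduct_mulVec_pos hy
  constructor
  · intro h
    have hzero : ((y ⬝ᵥ S *ᵥ y) • x - (x ⬝ᵥ S *ᵥ y) • y) ⬝ᵥ
        S *ᵥ ((y ⬝ᵥ S *ᵥ y) • x - (x ⬝ᵥ S *ᵥ y) • y) = 0 := by
      rw [hS.isSymm.quadForm_sub_smul, h]
      ring
    have hxy : (y ⬝ᵥ S *ᵥ y) • x = (x ⬝ᵥ S *ᵥ y) • y := by
      by_contra hne
      simpa [hzero] using hS.dotProduct_mulVec_pos (sub_ne_zero.2 hne)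
    refine ⟨(x ⬝ᵥ S *ᵥ y) / (y ⬝ᵥ S *ᵥ y), ?_⟩
    rw [div_eq_inv_mul, mul_smul, ← hxy, inv_smul_smul₀ hc.ne']
  · rintro ⟨c, rfl⟩
    simp only [mulVec_smul, smul_dotProduct, dotProduct_smul, smul_eq_mul]
    ring

end Matrix.PosDef

section FisherRatio

variable {ι : Type*} [Fintype ι] {S : Matrix ι ι ℝ}

noncomputable def fisherRatio (S : Matrix ι ι ℝ) (δ u : ι → ℝ) : ℝ :=
  (u ⬝ᵥ δ) ^ 2 / (u ⬝ᵥ S *ᵥ u)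

lemma fisherRatio_nonneg (hS : S.PosSemidef) (δ u : ι → ℝ) : 0 ≤ fisherRatio S δ u :=
  div_nonneg (sq_nonneg _) (by simpa using hS.dotProduct_mulVec_nonneg u)

lemma fisherRatio_mulVec_le (hS : S.PosDef) (θ u : ι → ℝ) :
    fisherRatio S (S *ᵥ θ) u ≤ θ ⬝ᵥ S *ᵥ θ := by
  rcases eq_or_ne u 0 with rfl | hu
  · simpa [fisherRatio] using hS.posSemidef.dotProduct_mulVec_nonneg θ
  have hq : 0 < u ⬝ᵥ S *ᵥ u := by simpa using hS.dotProduct_mulVec_pos hu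
  rw [fisherRatio, div_le_iff₀ hq, mul_comm]
  exact hS.sq_dotProduct_mulVec_le u θ

lemma fisherRatio_mulVec_eq_iff (hS : S.PosDef) {θ u : ι → ℝ} (hθ : θ ≠ 0) (hu : u ≠ 0) :
    fisherRatio S (S *ᵥ θ) u = θ ⬝ᵥ S *ᵥ θ ↔ ∃ c : ℝ, u = c • θ := by
  have hq : 0 < u ⬝ᵥ S *ᵥ u := by simpa using hS.dotProduct_mulVec_pos hu
  rw [fisherRatio, div_eq_iff hq.ne', mul_comm]
  exact hS.sq_dotProduct_mulVec_eq_iff hθ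

end FisherRatio

lemma integral_mixture {α E : Type*} [MeasurableSpace α] [NormedAddCommGroup E]
    [NormedSpace ℝ E] {ν₁ ν₂ : Measure α} {a₁ a₂ : ℝ} (ha₁ : 0 ≤ a₁) (ha₂ : 0 ≤ a₂)
    {f : α → E} (hf₁ : Integrable f ν₁) (hf₂ : Integrable f ν₂) :
    ∫ x, f x ∂(ENNReal.ofReal a₁ • ν₁ + ENNReal.ofReal a₂ • ν₂) =
      a₁ • ∫ x, f x ∂ν₁ + a₂ • ∫ x, f x ∂ν₂ := by
  rw [integral_add_measure (hf₁.smul_measure ENNReal.ofReal_ne_top)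
    (hf₂.smul_measure ENNReal.ofReal_ne_top), integral_smul_measure, integral_smul_measure,
    ENNReal.toReal_ofReal ha₁, ENNReal.toReal_ofReal ha₂]

noncomputable def projKurtosis {ι : Type*} [Fintype ι] (μ : Measure (ι → ℝ)) (u : ι → ℝ) : ℝ :=
  (∫ z, (u ⬝ᵥ (z - ∫ y, y ∂μ)) ^ 4 ∂μ) / (∫ z, (u ⬝ᵥ (z - ∫ y, y ∂μ)) ^ 2 ∂μ) ^ 2

section GaussianMixture

variable {p : ℕ} {S : Matrix (Fin p) (Fin p) ℝ}

lemma map_dotProduct_sub_mvGaussian (hS : S.PosSemidef) (m c u : Fin p → ℝ) :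
    (mvGaussian m hS).map (fun z => u ⬝ᵥ (z - c)) =
      gaussianReal (u ⬝ᵥ (m - c)) (u ⬝ᵥ S *ᵥ u).toNNReal := by
  have h : (fun z => u ⬝ᵥ (z - c)) ∘ (fun w => m + hS.sqrt *ᵥ w) =
      (fun x => u ⬝ᵥ (m - c) + x) ∘ ((u ᵥ* hS.sqrt) ⬝ᵥ ·) := by
    ext w
    simp only [Function.comp_apply, ← dotProduct_mulVec, add_sub_right_comm, dotProduct_add]
  rw [mvGaussian, Measure.map_map (by fun_prop) (by fun_prop), h,
    ← Measure.map_map (by fun_prop) (by fun_prop), map_dotProduct_pi_gaussianReal,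
    gaussianReal_map_const_add, zero_add, hS.dotProduct_vecMul_sqrt]

lemma integrable_dotProduct_sub_pow_mvGaussian (hS : S.PosSemidef) (m c u : Fin p → ℝ)
    (k : ℕ) : Integrable (fun z => (u ⬝ᵥ (z - c)) ^ k) (mvGaussian m hS) := by
  have h := integrable_pow_of_mem_interior_integrableExpSet (X := fun x => x)
    (μ := gaussianReal (u ⬝ᵥ (m - c)) (u ⬝ᵥ S *ᵥ u).toNNReal) (by simp) k
  rw [← map_dotProduct_sub_mvGaussian hS] at h
  exact h.comp_measurable (by fun_prop)

lemma integral_dotProduct_sub_pow_mvGaussian (hS : S.PosSemidef) (m c u : Fin p → ℝ)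
    (k : ℕ) : ∫ z, (u ⬝ᵥ (z - c)) ^ k ∂mvGaussian m hS =
      ∫ x, x ^ k ∂gaussianReal (u ⬝ᵥ (m - c)) (u ⬝ᵥ S *ᵥ u).toNNReal := by
  rw [← map_dotProduct_sub_mvGaussian hS, integral_map (by fun_prop) (by fun_prop)]

lemma integrable_id_mvGaussian (hS : S.PosSemidef) (m : Fin p → ℝ) :
    Integrable (fun z => z) (mvGaussian m hS) :=
  integrable_pi_iff.2 fun i => by
    simpa using integrable_dotProduct_sub_pow_mvGaussian hS m 0 (Pi.single i 1) 1

lemma integral_id_mvGaussian (hS : S.PosSemidef) (m : Fin p → ℝ) :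
    ∫ z, z ∂mvGaussian m hS = m := by
  ext i
  rw [eval_integral (integrable_pi_iff.1 (integrable_id_mvGaussian hS m))]
  simpa using integral_dotProduct_sub_pow_mvGaussian hS m 0 (Pi.single i 1) 1

noncomputable def gaussianMixture (a₁ a₂ : ℝ) (m₁ m₂ : Fin p → ℝ) (hS : S.PosSemidef) :
    Measure (Fin p → ℝ) :=
  ENNReal.ofReal a₁ • mvGaussian m₁ hS + ENNReal.ofReal a₂ • mvGaussian m₂ hS

variable {a₁ a₂ : ℝ} (m₁ m₂ : Fin p → ℝ)

lemma integral_id_gaussianMixture (ha₁ : 0 ≤ a₁) (ha₂ : 0 ≤ a₂) (hS : S.PosSemidef) :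
    ∫ z, z ∂gaussianMixture a₁ a₂ m₁ m₂ hS = a₁ • m₁ + a₂ • m₂ := by
  rw [gaussianMixture, integral_mixture ha₁ ha₂ (integrable_id_mvGaussian hS m₁)
    (integrable_id_mvGaussian hS m₂), integral_id_mvGaussian, integral_id_mvGaussian]

lemma integral_dotProduct_sub_pow_gaussianMixture (ha₁ : 0 ≤ a₁) (ha₂ : 0 ≤ a₂)
    (hS : S.PosSemidef) (c u : Fin p → ℝ) (k : ℕ) :
    ∫ z, (u ⬝ᵥ (z - c)) ^ k ∂gaussianMixture a₁ a₂ m₁ m₂ hS =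
      a₁ * ∫ x, x ^ k ∂gaussianReal (u ⬝ᵥ (m₁ - c)) (u ⬝ᵥ S *ᵥ u).toNNReal +
      a₂ * ∫ x, x ^ k ∂gaussianReal (u ⬝ᵥ (m₂ - c)) (u ⬝ᵥ S *ᵥ u).toNNReal := by
  rw [gaussianMixture, integral_mixture ha₁ ha₂
    (integrable_dotProduct_sub_pow_mvGaussian hS m₁ c u k)
    (integrable_dotProduct_sub_pow_mvGaussian hS m₂ c u k),
    integral_dotProduct_sub_pow_mvGaussian, integral_dotProduct_sub_pow_mvGaussian,
    smul_eq_mul, smul_eq_mul]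

lemma integral_dotProduct_sub_mean_pow_gaussianMixture (ha₁ : 0 ≤ a₁) (ha₂ : 0 ≤ a₂)
    (hsum : a₁ + a₂ = 1) (hS : S.PosSemidef) (u : Fin p → ℝ) (k : ℕ) :
    ∫ z, (u ⬝ᵥ (z - ∫ y, y ∂gaussianMixture a₁ a₂ m₁ m₂ hS)) ^ k
        ∂gaussianMixture a₁ a₂ m₁ m₂ hS =
      a₁ * ∫ x, x ^ k ∂gaussianReal (-(a₂ * (u ⬝ᵥ (m₂ - m₁)))) (u ⬝ᵥ S *ᵥ u).toNNReal +
      a₂ * ∫ x, x ^ k ∂gaussianReal (a₁ * (u ⬝ᵥ (m₂ - m₁))) (u ⬝ᵥ S *ᵥ u).toNNReal := by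
  have hb₁ : u ⬝ᵥ (m₁ - (a₁ • m₁ + a₂ • m₂)) = -(a₂ * (u ⬝ᵥ (m₂ - m₁))) := by
    simp only [dotProduct_sub, dotProduct_add, dotProduct_smul, smul_eq_mul]
    linear_combination -(u ⬝ᵥ m₁) * hsum
  have hb₂ : u ⬝ᵥ (m₂ - (a₁ • m₁ + a₂ • m₂)) = a₁ * (u ⬝ᵥ (m₂ - m₁)) := by
    simp only [dotProduct_sub, dotProduct_add, dotProduct_smul, smul_eq_mul]
    linear_combination -(u ⬝ᵥ m₂) * hsum
  rw [integral_id_gaussianMixture m₁ m₂ ha₁ ha₂,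
    integral_dotProduct_sub_pow_gaussianMixture m₁ m₂ ha₁ ha₂, hb₁, hb₂]

lemma projKurtosis_gaussianMixture_sub_three (ha₁ : 0 ≤ a₁) (ha₂ : 0 ≤ a₂)
    (hsum : a₁ + a₂ = 1) (hS : S.PosDef) {u : Fin p → ℝ} (hu : u ≠ 0) :
    projKurtosis (gaussianMixture a₁ a₂ m₁ m₂ hS.posSemidef) u - 3 =
      a₁ * a₂ * (1 - 6 * (a₁ * a₂)) *
        (fisherRatio S (m₂ - m₁) u / (1 + a₁ * a₂ * fisherRatio S (m₂ - m₁) u)) ^ 2 := by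
  have hq : 0 < u ⬝ᵥ S *ᵥ u := by simpa using hS.dotProduct_mulVec_pos hu
  rw [projKurtosis, integral_dotProduct_sub_mean_pow_gaussianMixture m₁ m₂ ha₁ ha₂ hsum,
    integral_dotProduct_sub_mean_pow_gaussianMixture m₁ m₂ ha₁ ha₂ hsum,
    integral_sq_gaussianReal, integral_sq_gaussianReal, integral_pow_four_gaussianReal,
    integral_pow_four_gaussianReal, Real.coe_toNNReal _ hq.le, fisherRatio]
  set d := u ⬝ᵥ (m₂ - m₁)
  set q := u ⬝ᵥ S *ᵥ u
  obtain rfl : a₂ = 1 - a₁ := by linarith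
  have hvar : a₁ * ((-((1 - a₁) * d)) ^ 2 + q) + (1 - a₁) * ((a₁ * d) ^ 2 + q) =
      q + a₁ * (1 - a₁) * d ^ 2 := by ring
  have hvar_pos : 0 < q + a₁ * (1 - a₁) * d ^ 2 := by positivity
  rw [hvar]
  field_simp
  ring

end GaussianMixture

lemma strictMonoOn_sq_mul_sq_div_one_add {β C : ℝ} (hβ : 0 ≤ β) (hC : C ≠ 0) :
    StrictMonoOn (fun r => (C * (r / (1 + β * r)) ^ 2) ^ 2) (Set.Ici 0) := by
  intro r (hr : 0 ≤ r) s (hs : 0 ≤ s) hrs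
  have hlt : r / (1 + β * r) < s / (1 + β * s) := by
    rw [div_lt_div_iff₀ (by positivity) (by positivity)]
    nlinarith
  simp only [mul_pow, ← pow_mul]
  exact mul_lt_mul_of_pos_left (pow_lt_pow_left₀ hlt (by positivity) (by norm_num))
    (by positivity)

lemma one_sub_six_mul_ne_zero {a₁ a₂ : ℝ} (hsum : a₁ + a₂ = 1)
    (ha : a₁ ≠ 1 / 2 - 1 / Real.sqrt 12 ∧ a₁ ≠ 1 / 2 + 1 / Real.sqrt 12) :
    1 - 6 * (a₁ * a₂) ≠ 0 := by
  intro h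
  have h12 : (1 / Real.sqrt 12) ^ 2 = 1 / 12 := by
    rw [div_pow, Real.sq_sqrt (by norm_num)]
    norm_num
  have hsq : (a₁ - 1 / 2) ^ 2 = (1 / Real.sqrt 12) ^ 2 := by
    rw [h12]
    linear_combination (1 / 6) * h + a₁ * hsum
  rcases sq_eq_sq_iff_eq_or_eq_neg.1 hsq with h' | h'
  · exact ha.2 (by linarith)
  · exact ha.1 (by linarith)

lemma smul_eq_or_eq_neg_of_sum_sq_eq_one {ι : Type*} [Fintype ι] {θ : ι → ℝ} {c : ℝ}
    (hu : ∑ i, (c • θ) i ^ 2 = 1) :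
    c • θ = (Real.sqrt (∑ i, θ i ^ 2))⁻¹ • θ ∨ c • θ = -((Real.sqrt (∑ i, θ i ^ 2))⁻¹ • θ) := by
  simp only [Pi.smul_apply, smul_eq_mul, mul_pow, ← Finset.mul_sum] at hu
  have hc : (Real.sqrt (∑ i, θ i ^ 2))⁻¹ = |c| := by
    rw [eq_inv_of_mul_eq_one_right hu, Real.sqrt_inv, inv_inv, Real.sqrt_sq_eq_abs]
  rw [hc, ← neg_smul]
  rcases abs_choice c with h | h <;> rw [h] <;> simp

lemma inv_sqrt_sum_sq_smul_ne_zero {ι : Type*} [Fintype ι] {θ : ι → ℝ} (hθ : θ ≠ 0) :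
    (Real.sqrt (∑ i, θ i ^ 2))⁻¹ • θ ≠ 0 := by
  have hθθ := dotProduct_self_eq_zero.not.2 hθ
  simp only [dotProduct, ← sq] at hθθ
  exact smul_ne_zero (inv_ne_zero (Real.sqrt_ne_zero'.2
    (lt_of_le_of_ne (by positivity) (Ne.symm hθθ)))) hθ

/-- under a two-component Gaussian mixture with `α₁ ∉ {1/2 ± 1/√12}`, the
squared excess kurtosis of projections is uniquely maximized at `± θ/‖θ‖`,
`θ = Σ⁻¹(μ₂ − μ₁)`. -/
theorem stmt_14 (p : ℕ) (a1 a2 : ℝ) (ha1 : 0 < a1) (ha2 : 0 < a2) (hsum : a1 + a2 = 1)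
    (m1 m2 : Fin p → ℝ) (hm : m1 ≠ m2)
    (S : Matrix (Fin p) (Fin p) ℝ) (hS : S.PosDef)
    (ha : a1 ≠ 1 / 2 - 1 / Real.sqrt 12 ∧ a1 ≠ 1 / 2 + 1 / Real.sqrt 12) :
    let μ := ENNReal.ofReal a1 • mvGaussian m1 hS.posSemidef
        + ENNReal.ofReal a2 • mvGaussian m2 hS.posSemidef
    let m := ∫ z, z ∂μ
    let κ := fun u : Fin p → ℝ =>
      (∫ z, (u ⬝ᵥ (z - m)) ^ 4 ∂μ) / (∫ z, (u ⬝ᵥ (z - m)) ^ 2 ∂μ) ^ 2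
    let θ := S⁻¹.mulVec (m2 - m1)
    let θn := (Real.sqrt (∑ i, θ i ^ 2))⁻¹ • θ
    ∀ u : Fin p → ℝ, (∑ i, u i ^ 2) = 1 →
      (κ u - 3) ^ 2 ≤ (κ θn - 3) ^ 2 ∧
      ((κ u - 3) ^ 2 = (κ θn - 3) ^ 2 ↔ u = θn ∨ u = -θn) := by
  intro μ m κ θ θn u hu
  have hδ : m2 - m1 = S *ᵥ θ := by
    rw [mulVec_mulVec, mul_nonsing_inv _ ((isUnit_iff_isUnit_det S).1 hS.isUnit), one_mulVec]
  have hθ : θ ≠ 0 := fun h => hm (sub_eq_zero.1 (by rw [hδ, h, mulVec_zero])).symm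
  have hκ : ∀ w ≠ 0, (κ w - 3) ^ 2 = (a1 * a2 * (1 - 6 * (a1 * a2)) *
      (fisherRatio S (S *ᵥ θ) w / (1 + a1 * a2 * fisherRatio S (S *ᵥ θ) w)) ^ 2) ^ 2 :=
    fun w hw => by
      rw [← hδ, ← projKurtosis_gaussianMixture_sub_three m1 m2 ha1.le ha2.le hsum hS hw]
      rfl
  have hmono := strictMonoOn_sq_mul_sq_div_one_add (mul_pos ha1 ha2).le
    (mul_ne_zero (mul_pos ha1 ha2).ne' (one_sub_six_mul_ne_zero hsum ha))
  have hθn : θn ≠ 0 := inv_sqrt_sum_sq_smul_ne_zero hθ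
  have hu0 : u ≠ 0 := by rintro rfl; simp at hu
  have hR0 : 0 ≤ θ ⬝ᵥ S *ᵥ θ := by simpa using hS.posSemidef.dotProduct_mulVec_nonneg θ
  have hr0 := fisherRatio_nonneg hS.posSemidef (S *ᵥ θ) u
  rw [hκ u hu0, hκ θn hθn, (fisherRatio_mulVec_eq_iff hS hθ hθn).2 ⟨_, rfl⟩,
    hmono.injOn.eq_iff hr0 hR0, fisherRatio_mulVec_eq_iff hS hθ hu0]
  refine ⟨hmono.monotoneOn hr0 hR0 (fisherRatio_mulVec_le hS θ u), ?_, ?_⟩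
  · rintro ⟨c, rfl⟩
    exact smul_eq_or_eq_neg_of_sum_sq_eq_one hu
  · rintro (h | h)
    · exact ⟨_, h⟩
    · exact ⟨_, h.trans (neg_smul _ θ).symm⟩
end
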